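/- arXiv:1606.00717 — 2 statements merged into one kernel-verified Lean document; each statement's English description precedes it below -/
import Mathlib

section
/- If x = (1-α/2)·e is a solution of the biased contribution index equation with all denominators nonzero, then for each peer i, the vector (sᵀ - s)·e_iᵀ is orthogonal to the all-ones vector e; equivalently, each peer's total upload equals its total download: Σ_j s_{ij} = Σ_j s_{ji} for all i. -/
open Matrix

theorem constant_solution_implies_balance (N : ℕ) (α : ℝ)
    (hα : α ∈ Set.Ioo (0:ℝ) 1)
    (s : Matrix (Fin N) (Fin N) ℝ) (hs : ∀ i j, 0 ≤ s i j)
    (hden : ∀ i, s.mulVec (fun _ => (1:ℝ)) i + sᵀ.mulVec (fun _ => (1:ℝ)) i ≠ 0)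
    (hfix : ∀ i,
      (1 - α / 2) =
        α * (s.mulVec (fun _ => (1 - α / 2)) i) /
          (s.mulVec (fun _ => (1 - α / 2)) i + sᵀ.mulVec (fun _ => (1 - α / 2)) i)
        + (1 - α)) :
    ∀ i, ((sᵀ - s).mulVec (Pi.single i 1)) ⬝ᵥ (fun _ => (1:ℝ)) = 0 ∧
      ∑ j, s i j = ∑ j, s j i := by
  obtain ⟨hα0, hα1⟩ := hα
  intro i
  have hc : (1 - α / 2) ≠ 0 := by linarith
  -- unfold mulVec at i with constant vectors
  have hrow : ∀ (c : ℝ), s.mulVec (fun _ => c) i = c * ∑ j, s i j := by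
    intro c
    simp [Matrix.mulVec, dotProduct, Finset.mul_sum, mul_comm]
  have hcol : ∀ (c : ℝ), sᵀ.mulVec (fun _ => c) i = c * ∑ j, s j i := by
    intro c
    simp [Matrix.mulVec, dotProduct, Matrix.transpose, Finset.mul_sum, mul_comm]
  have hden' : (1 - α / 2) * (∑ j, s i j) + (1 - α / 2) * (∑ j, s j i) ≠ 0 := by
    have h := hden i
    rw [hrow, hcol] at h
    intro hcontra
    apply h
    have : (1 - α/2) * ((∑ j, s i j) + ∑ j, s j i) = 0 := by linarith
    have := (mul_eq_zero.mp this).resolve_left hc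
    simp only [one_mul]
    linarith
  have hfix' := hfix i
  rw [hrow, hcol] at hfix'
  have key : ∑ j, s i j = ∑ j, s j i := by
    have h2 : α / 2 = α * ((1 - α / 2) * ∑ j, s i j) /
        ((1 - α / 2) * (∑ j, s i j) + (1 - α / 2) * ∑ j, s j i) := by linarith
    rw [eq_div_iff hden'] at h2
    have hpos : 0 < α * (1 - α / 2) := mul_pos hα0 (by linarith)
    nlinarith [h2, hpos]
  refine ⟨?_, key⟩
  have : ((sᵀ - s).mulVec (Pi.single i 1)) ⬝ᵥ (fun _ => (1:ℝ))
      = ∑ j, (s i j - s j i) := by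
    simp [Matrix.mulVec, dotProduct, Matrix.sub_apply, Matrix.transpose,
      Pi.single_apply, Finset.sum_sub_distrib]
  rw [this, Finset.sum_sub_distrib, key, sub_self]
end

section
/- If each peer's total upload equals its total download (s·e = sᵀ·e), then any positive solution x of the biased contribution index equation must be the constant vector x = (1-α/2)·e. -/
open Matrix

theorem balance_implies_constant (N : ℕ) (α : ℝ) (hα : α ∈ Set.Ioo (0:ℝ) 1)
    (s : Matrix (Fin N) (Fin N) ℝ) (hs : ∀ i j, 0 ≤ s i j)
    (hbal : s.mulVec (fun _ => (1:ℝ)) = sᵀ.mulVec (fun _ => (1:ℝ)))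
    (hirr : ∀ i j, ∃ k ≥ 1, 0 < ((s + sᵀ) ^ k) i j)
    (x : Fin N → ℝ) (hx : ∀ i, 0 < x i)
    (hne : (s + sᵀ).mulVec x ≠ 0)
    (hfix : ∀ i,
      x i * (s.mulVec x i + sᵀ.mulVec x i) =
        s.mulVec x i + (1 - α) * sᵀ.mulVec x i) :
    x = fun _ => 1 - α / 2 := by
  obtain ⟨hα0, hα1⟩ := hα
  set A := s + sᵀ with hA
  have hAnn : ∀ i j, 0 ≤ A i j := by
    intro i j
    have : A i j = s i j + s j i := by simp [hA, Matrix.add_apply, Matrix.transpose_apply]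
    rw [this]; exact add_nonneg (hs i j) (hs j i)
  -- Ax is strictly positive by irreducibility
  have hAx : ∀ i, 0 < A.mulVec x i := by
    intro i
    have hnn : ∀ j ∈ Finset.univ, 0 ≤ A i j * x j :=
      fun j _ => mul_nonneg (hAnn i j) (hx j).le
    have hsum : 0 ≤ A.mulVec x i := by
      simp only [Matrix.mulVec, dotProduct]
      exact Finset.sum_nonneg hnn
    rcases hsum.lt_or_eq with h | h
    · exact h
    · exfalso
      have h' : ∑ j, A i j * x j = 0 := by
        simpa [Matrix.mulVec, dotProduct] using h.symm
      have hrow : ∀ j, A i j = 0 := by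
        intro j
        have hz := (Finset.sum_eq_zero_iff_of_nonneg hnn).mp h' j (Finset.mem_univ j)
        have := (hx j).ne'
        rcases mul_eq_zero.mp hz with h1 | h1
        · exact h1
        · exact absurd h1 this
      obtain ⟨k, hk1, hkpos⟩ := hirr i i
      obtain ⟨k', rfl⟩ : ∃ k', k = k' + 1 := ⟨k - 1, by omega⟩
      have hzero : (A ^ (k' + 1)) i i = 0 := by
        rw [pow_succ']
        rw [Matrix.mul_apply]
        exact Finset.sum_eq_zero fun m _ => by rw [hrow m, zero_mul]
      rw [hzero] at hkpos
      exact lt_irrefl 0 hkpos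
  -- balance: row sums equal column sums
  have hbal' : ∀ i, ∑ j, s i j = ∑ j, s j i := by
    intro i
    have := congrFun hbal i
    simpa [Matrix.mulVec, dotProduct, Matrix.transpose_apply] using this
  -- key pointwise identity
  have key : ∀ i, (x i - (1 - α / 2)) * (A.mulVec x i)
      = (α / 2) * (s.mulVec x i - sᵀ.mulVec x i) := by
    intro i
    have hadd : A.mulVec x i = s.mulVec x i + sᵀ.mulVec x i := by
      rw [hA, Matrix.add_mulVec]; rfl
    rw [hadd]
    linear_combination hfix i
  -- sum identities
  have S1 : ∑ i, x i * s.mulVec x i = ∑ i, x i * sᵀ.mulVec x i := by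
    simp only [Matrix.mulVec, dotProduct, Matrix.transpose_apply, Finset.mul_sum]
    rw [Finset.sum_comm]
    exact Finset.sum_congr rfl fun i _ => Finset.sum_congr rfl fun j _ => by ring
  have h1 : ∑ i, s.mulVec x i = ∑ i, (∑ j, s j i) * x i := by
    simp only [Matrix.mulVec, dotProduct]
    rw [Finset.sum_comm]
    exact Finset.sum_congr rfl fun i _ => by rw [← Finset.sum_mul]
  have h2 : ∑ i, sᵀ.mulVec x i = ∑ i, (∑ j, s i j) * x i := by
    simp only [Matrix.mulVec, dotProduct, Matrix.transpose_apply]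
    rw [Finset.sum_comm]
    exact Finset.sum_congr rfl fun i _ => by rw [← Finset.sum_mul]
  have S2 : ∑ i, s.mulVec x i = ∑ i, sᵀ.mulVec x i := by
    rw [h1, h2]
    exact Finset.sum_congr rfl fun i _ => by rw [hbal' i]
  -- the weighted sum of squares vanishes
  have hsum0 : ∑ i, (x i - (1 - α / 2)) ^ 2 * (A.mulVec x i) = 0 := by
    have step : ∀ i, (x i - (1 - α / 2)) ^ 2 * (A.mulVec x i)
        = (x i - (1 - α / 2)) * ((α / 2) * (s.mulVec x i - sᵀ.mulVec x i)) := by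
      intro i; rw [← key i]; ring
    rw [Finset.sum_congr rfl fun i _ => step i]
    have expand : ∑ i, (x i - (1 - α / 2)) * ((α / 2) * (s.mulVec x i - sᵀ.mulVec x i))
        = (α / 2) * ((∑ i, x i * s.mulVec x i) - (∑ i, x i * sᵀ.mulVec x i))
          - (α / 2) * (1 - α / 2) * ((∑ i, s.mulVec x i) - (∑ i, sᵀ.mulVec x i)) := by
      simp only [Finset.mul_sum, ← Finset.sum_sub_distrib]
      exact Finset.sum_congr rfl fun i _ => by ring
    rw [expand, S1, S2]
    ring
  -- each term is zero
  have hterm : ∀ i, (x i - (1 - α / 2)) ^ 2 * (A.mulVec x i) = 0 := by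
    intro i
    exact (Finset.sum_eq_zero_iff_of_nonneg
      (fun j _ => mul_nonneg (sq_nonneg _) (hAx j).le)).mp hsum0 i (Finset.mem_univ i)
  funext i
  show x i = 1 - α / 2
  have h := hterm i
  have hpos := hAx i
  have hsq : (x i - (1 - α / 2)) ^ 2 = 0 := by
    rcases mul_eq_zero.mp h with h' | h'
    · exact h'
    · linarith
  have := pow_eq_zero_iff (n := 2) (by norm_num) |>.mp hsq
  linarith [sub_eq_zero.mp this]
end
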